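/- Let θ > 0 satisfy fθ < −Re λ for every nonzero complex eigenvalue λ of D+B, and suppose that ζ_θ, a nonzero vector in the kernel of M := D+Bᵀ − θE + fθI, has all coordinates strictly positive. Then for every x ∈ ℝⁿ₊ with ⟨e,x⟩ > 0: (i) Y(t) := exp(tM)(x/⟨e,x⟩) converges, as t → ∞, to ζ_θ/⟨e,ζ_θ⟩; (ii) if moreover m : [0,∞) → (0,∞) is differentiable, satisfies m′(t) = (φ(m(t)) − fθ) m(t) with m(0) = ⟨e,x⟩ for some continuous φ : (0,∞) → ℝ, and m(t) → m̂ ∈ (0,∞) as t → ∞, then X := mY converges to m̂ · ζ_θ/⟨e,ζ_θ⟩. -/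

import Mathlib

/-!
`exp (t • M)` fixes `ζ_θ` and, because every column of `M` sums to zero, it preserves the
hyperplane `∑ i, w i = 0`; so it suffices that `exp (t • M) w → 0` on that hyperplane.
There `E` acts as zero, so an eigenvector of `M` with eigenvalue `λ` is an eigenvector of
`(D + B)ᵀ` with eigenvalue `λ - fθ`. The value `λ = fθ` is excluded by a Perron–Frobenius
argument: `exp (D + B)` is a stochastic matrix with positive entries, and a sum-zero fixed vector
of its transpose would strictly decrease its own `ℓ¹` norm. Otherwise `λ - fθ` is a nonzero
eigenvalue of `D + B`, and the spectral hypothesis gives `Re λ < 0`. Each generalized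
eigencomponent then decays like `tᵏ e^{t Re λ}`. Part (ii) is a product of limits.
-/

open Matrix Finset Filter

/-- The diagonal matrix of outflows: `D i i = -∑_{j ≠ i} B i j`. -/
noncomputable def Dmat {n : ℕ} (B : Matrix (Fin n) (Fin n) ℝ) : Matrix (Fin n) (Fin n) ℝ :=
  Matrix.diagonal fun i => -∑ j ∈ Finset.univ.erase i, B i j

/-- Strong connectivity of the directed graph with an edge `i → j` whenever `B i j > 0`. -/
def StronglyConnected {n : ℕ} (B : Matrix (Fin n) (Fin n) ℝ) : Prop :=
  ∀ i j : Fin n, Relation.ReflTransGen (fun a b => 0 < B a b) i j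

/-- The matrix `E = ξ eᵀ`, whose `i`-th row is the all-ones row for `i ∈ F` and zero
otherwise. -/
def Emat {n : ℕ} (F : Finset (Fin n)) : Matrix (Fin n) (Fin n) ℝ :=
  fun i _ => if i ∈ F then 1 else 0

open NormedSpace Topology

namespace Matrix

open scoped Nat

variable {ι : Type*} [Fintype ι]

theorem eq_zero_of_vecMul_eq_self {Q : Matrix ι ι ℝ} (hQ : ∀ i j, 0 < Q i j)
    (hrow : ∀ i, ∑ j, Q i j = 1) {v : ι → ℝ} (hv : v ᵥ* Q = v) (hs : ∑ i, v i = 0) : v = 0 := by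
  by_contra hv0
  obtain ⟨a, ha⟩ : ∃ a, 0 < v a := by
    by_contra! h
    exact hv0 (funext fun i => (sum_eq_zero_iff_of_nonpos fun i _ => h i).mp hs i (mem_univ i))
  obtain ⟨b, hb⟩ : ∃ b, v b < 0 := by
    by_contra! h
    exact hv0 (funext fun i => (sum_eq_zero_iff_of_nonneg fun i _ => h i).mp hs i (mem_univ i))
  -- As `v` takes both signs and `Q` is positive, `v ᵥ* Q` has strictly smaller `ℓ¹` norm than `v`.
  have hstrict : ∀ j, |∑ i, v i * Q i j| < ∑ i, |v i| * Q i j := by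
    intro j
    have hpos : ∑ i, v i * Q i j < ∑ i, |v i| * Q i j :=
      sum_lt_sum (fun i _ => mul_le_mul_of_nonneg_right (le_abs_self _) (hQ i j).le)
        ⟨b, mem_univ b, by nlinarith [hQ b j, abs_nonneg (v b)]⟩
    have hneg : -∑ i, v i * Q i j < ∑ i, |v i| * Q i j := by
      rw [← sum_neg_distrib]
      exact sum_lt_sum (fun i _ => by nlinarith [neg_abs_le (v i), hQ i j])
        ⟨a, mem_univ a, by nlinarith [hQ a j, abs_of_pos ha]⟩
    exact abs_lt.mpr ⟨by linarith, hpos⟩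
  have : ∑ j, |v j| < ∑ j, |v j| :=
    calc ∑ j, |v j| = ∑ j, |(v ᵥ* Q) j| := by rw [hv]
      _ = ∑ j, |∑ i, v i * Q i j| := rfl
      _ < ∑ j, ∑ i, |v i| * Q i j := sum_lt_sum_of_nonempty ⟨a, mem_univ a⟩ fun j _ => hstrict j
      _ = ∑ i, |v i| := by
          rw [sum_comm]; simp_rw [← mul_sum, hrow, mul_one]
  exact lt_irrefl _ this

theorem re_map_ofReal_mulVec (X : Matrix ι ι ℝ) (u : ι → ℂ) :
    (X *ᵥ fun j => (u j).re) = fun i => ((X.map Complex.ofReal *ᵥ u) i).re := by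
  ext i; simp [mulVec, dotProduct, Complex.re_sum]

theorem im_map_ofReal_mulVec (X : Matrix ι ι ℝ) (u : ι → ℂ) :
    (X *ᵥ fun j => (u j).im) = fun i => ((X.map Complex.ofReal *ᵥ u) i).im := by
  ext i; simp [mulVec, dotProduct, Complex.im_sum]

variable [DecidableEq ι]

section Exp

variable {𝕜 : Type*} [RCLike 𝕜]

theorem hasSum_exp (X : Matrix ι ι 𝕜) :
    HasSum (fun k => (k ! : 𝕜)⁻¹ • X ^ k) (exp X) := by
  -- Any submultiplicative norm will do: it induces the product topology used in `HasSum`.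
  -- Completeness must be supplied for this norm's uniformity rather than the product one.
  let _ : NormedRing (Matrix ι ι 𝕜) := Matrix.linftyOpNormedRing
  let _ : NormedAlgebra 𝕜 (Matrix ι ι 𝕜) := Matrix.linftyOpNormedAlgebra
  exact @exp_series_hasSum_exp' 𝕜 _ _ _ _ _ _ (FiniteDimensional.complete 𝕜 _) X

theorem hasSum_exp_mulVec (X : Matrix ι ι 𝕜) (v : ι → 𝕜) :
    HasSum (fun k => (k ! : 𝕜)⁻¹ • (X ^ k *ᵥ v)) (exp X *ᵥ v) := by
  have := (hasSum_exp X).map (mulVec.addMonoidHomLeft v)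
    (continuous_id.matrix_mulVec continuous_const)
  simpa [Function.comp_def, mulVec.addMonoidHomLeft, smul_mulVec] using this

theorem exp_mulVec_eq_sum_range (X : Matrix ι ι 𝕜) {v : ι → 𝕜} {k : ℕ}
    (h : X ^ k *ᵥ v = 0) : exp X *ᵥ v = ∑ j ∈ range k, (j ! : 𝕜)⁻¹ • (X ^ j *ᵥ v) := by
  refine (hasSum_exp_mulVec X v).unique (hasSum_sum_of_ne_finset_zero fun j hj => ?_)
  obtain ⟨d, rfl⟩ := Nat.exists_eq_add_of_le (not_lt.mp (mt mem_range.mpr hj))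
  rw [add_comm, pow_add, ← mulVec_mulVec, h, mulVec_zero, smul_zero]

theorem exp_mulVec_of_mulVec_eq_zero (X : Matrix ι ι 𝕜) {v : ι → 𝕜} (h : X *ᵥ v = 0) :
    exp X *ᵥ v = v := by
  simpa using exp_mulVec_eq_sum_range X (k := 1) (by simpa using h)

theorem exp_smul_one (c : 𝕜) : exp (c • (1 : Matrix ι ι 𝕜)) = exp c • 1 := by
  rw [smul_one_eq_diagonal, exp_diagonal, Pi.exp_def, smul_one_eq_diagonal]

end Exp

section Positivity

variable {P : Matrix ι ι ℝ}

theorem exists_pow_apply_pos_of_reflTransGen (hP : ∀ i j, 0 ≤ P i j) {i j : ι}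
    (h : Relation.ReflTransGen (fun a b => 0 < P a b) i j) : ∃ k, 0 < (P ^ k) i j := by
  induction h with
  | refl => exact ⟨0, by simp⟩
  | @tail b c _ hbc ih =>
    obtain ⟨k, hk⟩ := ih
    refine ⟨k + 1, ?_⟩
    rw [pow_succ, mul_apply]
    exact sum_pos' (fun l _ => mul_nonneg (pow_apply_nonneg hP k i l) (hP l c))
      ⟨b, mem_univ b, mul_pos hk hbc⟩

theorem exp_apply_pos_of_pow_apply_pos (hP : ∀ i j, 0 ≤ P i j) {i j : ι} {k : ℕ}
    (hk : 0 < (P ^ k) i j) : 0 < exp P i j := by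
  have hsum : HasSum (fun m => (m ! : ℝ)⁻¹ * (P ^ m) i j) (exp P i j) :=
    Pi.hasSum.mp (Pi.hasSum.mp (hasSum_exp P) i) j
  calc 0 < (k ! : ℝ)⁻¹ * (P ^ k) i j := by positivity
    _ ≤ exp P i j := le_hasSum hsum k fun m _ => by
        have := pow_apply_nonneg hP m i j
        positivity

theorem exp_apply_pos_of_reflTransGen {A : Matrix ι ι ℝ} (hA : ∀ i j, i ≠ j → 0 ≤ A i j)
    (hconn : ∀ i j, Relation.ReflTransGen (fun a b => 0 < A a b) i j) (i j : ι) :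
    0 < exp A i j := by
  set c := ∑ i, |A i i|
  set P := A + c • 1
  have hc : ∀ a, |A a a| ≤ c := fun a =>
    single_le_sum (f := fun i => |A i i|) (fun _ _ => abs_nonneg _) (mem_univ a)
  have hPdiag : ∀ a, P a a = A a a + c := fun a => by simp [P]
  have hle : ∀ a b, A a b ≤ P a b := fun a b => by
    by_cases h : a = b
    · subst h; linarith [hPdiag a, abs_nonneg (A a a), hc a]
    · simp [P, h]
  have hP : ∀ a b, 0 ≤ P a b := fun a b => by
    by_cases h : a = b
    · subst h; linarith [hPdiag a, neg_abs_le (A a a), hc a]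
    · exact (hA a b h).trans (hle a b)
  obtain ⟨k, hk⟩ := exists_pow_apply_pos_of_reflTransGen hP
    (Relation.ReflTransGen.mono (fun a b h => h.trans_le (hle a b)) _ _ (hconn i j))
  have hexp : exp A = exp (-c) • exp P := by
    rw [show A = (-c) • 1 + P by simp [P],
      exp_add_of_commute _ _ ((Commute.one_left P).smul_left _), exp_smul_one, smul_one_mul]
  rw [hexp, smul_apply, smul_eq_mul, ← Real.exp_eq_exp_ℝ]
  exact mul_pos (Real.exp_pos _) (exp_apply_pos_of_pow_apply_pos hP hk)

end Positivity

section Decay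

theorem exists_mulVec_eq_smul_of_transpose {K : Type*} [Field K] (A : Matrix ι ι K) {ν : K}
    (h : ∃ v ≠ 0, Aᵀ *ᵥ v = ν • v) : ∃ v ≠ 0, A *ᵥ v = ν • v := by
  have key : ∀ X : Matrix ι ι K, (∃ v ≠ 0, X *ᵥ v = ν • v) ↔ (X - ν • 1).det = 0 := fun X => by
    simp_rw [← exists_mulVec_eq_zero_iff, sub_mulVec, smul_mulVec, one_mulVec, sub_eq_zero]
  rw [key] at h ⊢
  rwa [← det_transpose, transpose_sub, transpose_smul, transpose_one]

theorem tendsto_cexp_mul_mul_pow_atTop {μ : ℂ} (hμ : μ.re < 0) (j : ℕ) :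
    Tendsto (fun t : ℝ => Complex.exp (t * μ) * (t : ℂ) ^ j) atTop (𝓝 0) := by
  rw [tendsto_zero_iff_norm_tendsto_zero]
  refine (tendsto_rpow_mul_exp_neg_mul_atTop_nhds_zero j (-μ.re) (by linarith)).congr' ?_
  filter_upwards [eventually_ge_atTop 0] with t ht
  simp [Complex.norm_exp, abs_of_nonneg ht, mul_comm]

theorem tendsto_exp_smul_mulVec_of_mem_maxGenEigenspace (M : Matrix ι ι ℂ) {μ : ℂ}
    (hμ : μ.re < 0) {u : ι → ℂ} (hu : u ∈ Module.End.maxGenEigenspace (toLin' M) μ) :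
    Tendsto (fun t : ℝ => exp (t • M) *ᵥ u) atTop (𝓝 0) := by
  obtain ⟨k, hk⟩ := (Module.End.mem_maxGenEigenspace _ _ _).mp hu
  set N := M - μ • 1
  have hN : toLin' N = toLin' M - μ • 1 := by simp [N, toLin'_one, Module.End.one_eq_id]
  have hNk : N ^ k *ᵥ u = 0 := by rwa [← hN, ← toLin'_pow, toLin'_apply] at hk
  have hexp : ∀ t : ℝ, exp (t • M) *ᵥ u
      = ∑ j ∈ range k, (Complex.exp (t * μ) * (t : ℂ) ^ j * (j ! : ℂ)⁻¹) • (N ^ j *ᵥ u) := by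
    intro t
    have hsplit : t • M = ((t : ℂ) * μ) • 1 + (t : ℂ) • N := by
      simp only [N, smul_sub, mul_smul, ← Complex.coe_smul]; abel
    have htNk : ((t : ℂ) • N) ^ k *ᵥ u = 0 := by rw [smul_pow, smul_mulVec, hNk, smul_zero]
    rw [hsplit, exp_add_of_commute _ _ ((Commute.one_left _).smul_left _), exp_smul_one,
      smul_mul_assoc, one_mul, smul_mulVec, exp_mulVec_eq_sum_range _ htNk, smul_sum]
    refine sum_congr rfl fun j _ => ?_
    rw [smul_pow, smul_mulVec, smul_smul, smul_smul, ← Complex.exp_eq_exp_ℂ]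
    ring_nf
  simp_rw [hexp]
  simpa using tendsto_finsetSum (range k) fun j _ =>
    ((tendsto_cexp_mul_mul_pow_atTop hμ j).mul_const _).smul_const (N ^ j *ᵥ u)

theorem tendsto_exp_smul_mulVec_of_forall_re_neg (M : Matrix ι ι ℂ) {p : Submodule ℂ (ι → ℂ)}
    (hp : ∀ u ∈ p, M *ᵥ u ∈ p)
    (hre : ∀ (μ : ℂ), ∀ u ∈ p, u ≠ 0 → M *ᵥ u = μ • u → μ.re < 0) {w : ι → ℂ} (hw : w ∈ p) :
    Tendsto (fun t : ℝ => exp (t • M) *ᵥ w) atTop (𝓝 0) := by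
  have hp' : ∀ u ∈ p, toLin' M u ∈ p := by simpa using hp
  rw [Submodule.eq_iSup_inf_genEigenspace ⊤ hp' (Module.End.iSup_maxGenEigenspace_eq_top _)] at hw
  refine Submodule.iSup_induction (motive := fun w => Tendsto (fun t : ℝ => exp (t • M) *ᵥ w)
    atTop (𝓝 0)) _ hw (fun μ u hu => ?_) (by simp)
    fun x y hx hy => by simpa [mulVec_add] using hx.add hy
  by_cases hu0 : u = 0
  · simp [hu0]
  refine tendsto_exp_smul_mulVec_of_mem_maxGenEigenspace M ?_ hu.2
  rw [Submodule.inf_genEigenspace _ _ hp'] at hu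
  obtain ⟨u', hu', rfl⟩ := hu
  have hgen : Module.End.HasUnifEigenvalue (LinearMap.restrict (toLin' M) hp') μ ⊤ :=
    (Submodule.ne_bot_iff _).mpr ⟨u', hu', fun h => hu0 (by simp [h])⟩
  obtain ⟨z, hz⟩ := Module.End.HasEigenvalue.exists_hasEigenvector (hgen.lt zero_lt_one)
  refine hre μ z z.2 (by simpa using hz.2) ?_
  simpa [LinearMap.restrict_apply, Subtype.ext_iff] using hz.apply_eq_smul

theorem exp_map_ofReal (X : Matrix ι ι ℝ) :
    (exp X).map Complex.ofReal = exp (X.map Complex.ofReal) := by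
  refine ((hasSum_exp X).map (Complex.ofRealHom.mapMatrix : Matrix ι ι ℝ →+* Matrix ι ι ℂ)
    (continuous_id.matrix_map Complex.continuous_ofReal)).unique ?_
  convert hasSum_exp (X.map Complex.ofReal) using 2 with k
  have hpow : X.map Complex.ofReal ^ k = (X ^ k).map Complex.ofReal :=
    (X.map_pow Complex.ofRealHom k).symm
  ext i j
  simp [hpow]

theorem tendsto_exp_smul_mulVec_of_map_ofReal (X : Matrix ι ι ℝ) (w : ι → ℝ)
    (h : Tendsto (fun t : ℝ => exp (t • X.map Complex.ofReal) *ᵥ (fun i => (w i : ℂ)))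
      atTop (𝓝 0)) :
    Tendsto (fun t : ℝ => exp (t • X) *ᵥ w) atTop (𝓝 0) := by
  have hre : Continuous fun z : ι → ℂ => fun i => (z i).re :=
    continuous_pi fun i => Complex.continuous_re.comp (continuous_apply i)
  have key : ∀ t : ℝ, exp (t • X) *ᵥ w
      = fun i => ((exp (t • X.map Complex.ofReal) *ᵥ fun i => (w i : ℂ)) i).re := by
    intro t
    have hmap : (t • X).map Complex.ofReal = t • X.map Complex.ofReal := by ext; simp
    rw [← hmap, ← exp_map_ofReal, ← re_map_ofReal_mulVec]
    rfl
  simp_rw [key]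
  simpa [Function.comp_def, Pi.zero_def] using (hre.tendsto 0).comp h

theorem tendsto_exp_smul_mulVec_normalized {M : Matrix ι ι ℝ}
    (hdecay : ∀ w : ι → ℝ, ∑ i, w i = 0 → Tendsto (fun t : ℝ => exp (t • M) *ᵥ w) atTop (𝓝 0))
    {ζ : ι → ℝ} (hζ : M *ᵥ ζ = 0) (hζs : ∑ i, ζ i ≠ 0) {x : ι → ℝ} (hx : ∑ i, x i ≠ 0) :
    Tendsto (fun t : ℝ => exp (t • M) *ᵥ ((∑ i, x i)⁻¹ • x)) atTop (𝓝 ((∑ i, ζ i)⁻¹ • ζ)) := by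
  set w := (∑ i, x i)⁻¹ • x - (∑ i, ζ i)⁻¹ • ζ
  have hw : ∑ i, w i = 0 := by simp [w, sum_sub_distrib, ← mul_sum, hx, hζs]
  have hfix : ∀ t : ℝ, exp (t • M) *ᵥ ζ = ζ := fun t =>
    exp_mulVec_of_mulVec_eq_zero _ (by rw [smul_mulVec, hζ, smul_zero])
  have := (hdecay w hw).const_add ((∑ i, ζ i)⁻¹ • ζ)
  rw [add_zero] at this
  refine this.congr fun t => ?_
  rw [mulVec_sub, mulVec_smul _ (∑ i, ζ i)⁻¹, hfix, add_sub_cancel]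

end Decay

end Matrix

section Model

variable {n : ℕ} {B : Matrix (Fin n) (Fin n) ℝ}

noncomputable def extractionMatrix (B : Matrix (Fin n) (Fin n) ℝ) (F : Finset (Fin n)) (θ : ℝ) :
    Matrix (Fin n) (Fin n) ℝ :=
  (Dmat B + B)ᵀ - θ • Emat F + ((F.card : ℝ) * θ) • 1

theorem Dmat_add_apply_of_ne {i j : Fin n} (h : i ≠ j) :
    (Dmat B + B) i j = B i j := by
  simp [Dmat, h]

theorem Dmat_add_mulVec_one (hdiag : ∀ i, B i i = 0) : (Dmat B + B) *ᵥ 1 = 0 := by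
  ext i
  have := add_sum_erase univ (B i) (mem_univ i)
  simp_all [Dmat, mulVec, dotProduct, diagonal_apply, sum_add_distrib]

theorem exp_Dmat_add_apply_pos (hB : ∀ i j, 0 ≤ B i j) (hdiag : ∀ i, B i i = 0)
    (hconn : StronglyConnected B) (i j : Fin n) : 0 < exp (Dmat B + B) i j := by
  refine exp_apply_pos_of_reflTransGen (fun a b h => ?_) (fun a b => ?_) i j
  · rw [Dmat_add_apply_of_ne h]; exact hB a b
  · refine Relation.ReflTransGen.mono (fun c d hcd => ?_) _ _ (hconn a b)
    have hne : c ≠ d := by rintro rfl; simp [hdiag] at hcd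
    rwa [Dmat_add_apply_of_ne hne]

theorem eq_zero_of_transpose_mulVec_eq_zero (hB : ∀ i j, 0 ≤ B i j) (hdiag : ∀ i, B i i = 0)
    (hconn : StronglyConnected B) {v : Fin n → ℝ} (hv : (Dmat B + B)ᵀ *ᵥ v = 0)
    (hs : ∑ i, v i = 0) : v = 0 := by
  refine eq_zero_of_vecMul_eq_self (exp_Dmat_add_apply_pos hB hdiag hconn) (fun i => ?_) ?_ hs
  · simpa [mulVec, dotProduct] using
      congrFun (exp_mulVec_of_mulVec_eq_zero _ (Dmat_add_mulVec_one hdiag)) i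
  · rw [← mulVec_transpose, ← exp_transpose, exp_mulVec_of_mulVec_eq_zero _ hv]

theorem eq_zero_of_transpose_map_mulVec_eq_zero (hB : ∀ i j, 0 ≤ B i j)
    (hdiag : ∀ i, B i i = 0) (hconn : StronglyConnected B) {u : Fin n → ℂ}
    (hu : (Dmat B + B)ᵀ.map Complex.ofReal *ᵥ u = 0) (hs : ∑ i, u i = 0) : u = 0 := by
  have hre := eq_zero_of_transpose_mulVec_eq_zero hB hdiag hconn (v := fun i => (u i).re)
    (by rw [re_map_ofReal_mulVec, hu]; rfl) (by simpa [Complex.re_sum] using congrArg Complex.re hs)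
  have him := eq_zero_of_transpose_mulVec_eq_zero hB hdiag hconn (v := fun i => (u i).im)
    (by rw [im_map_ofReal_mulVec, hu]; rfl) (by simpa [Complex.im_sum] using congrArg Complex.im hs)
  exact funext fun i => Complex.ext (congrFun hre i) (congrFun him i)

theorem one_vecMul_extractionMatrix (hdiag : ∀ i, B i i = 0) (F : Finset (Fin n)) (θ : ℝ) :
    1 ᵥ* extractionMatrix B F θ = 0 := by
  have hE : (1 : Fin n → ℝ) ᵥ* Emat F = (F.card : ℝ) • 1 := by
    ext j; simp [vecMul, dotProduct, Emat]
  simp only [extractionMatrix, vecMul_add, vecMul_sub, vecMul_smul, vecMul_transpose,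
    Dmat_add_mulVec_one hdiag, hE, vecMul_one, smul_smul]
  ring_nf

theorem re_neg_of_map_extractionMatrix_mulVec_eq_smul (hB : ∀ i j, 0 ≤ B i j)
    (hdiag : ∀ i, B i i = 0) (hconn : StronglyConnected B) {F : Finset (Fin n)} {θ : ℝ}
    (hspec : ∀ (μ : ℂ) (v : Fin n → ℂ), v ≠ 0 →
      ((Dmat B + B).map Complex.ofReal) *ᵥ v = μ • v → μ ≠ 0 → (F.card : ℝ) * θ < -μ.re)
    {μ : ℂ} {u : Fin n → ℂ} (hu0 : u ≠ 0) (hs : ∑ i, u i = 0)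
    (h : (extractionMatrix B F θ).map Complex.ofReal *ᵥ u = μ • u) : μ.re < 0 := by
  set fθ : ℝ := F.card * θ
  have hE : (Emat F).map Complex.ofReal *ᵥ u = 0 := by
    ext i; by_cases hi : i ∈ F <;> simp [Emat, mulVec, dotProduct, hi, hs]
  have hM : (extractionMatrix B F θ).map Complex.ofReal
      = (Dmat B + B)ᵀ.map Complex.ofReal - (θ : ℂ) • (Emat F).map Complex.ofReal
        + (fθ : ℂ) • 1 := by
    ext i j; by_cases hij : i = j <;> simp [extractionMatrix, one_apply, hij, fθ]
  have hA : (Dmat B + B)ᵀ.map Complex.ofReal *ᵥ u = (μ - fθ) • u := by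
    rw [hM, add_mulVec, sub_mulVec, smul_mulVec, hE, smul_zero, sub_zero, smul_mulVec,
      one_mulVec] at h
    rw [sub_smul, ← h, add_sub_cancel_right]
  by_cases hμ : μ = fθ
  · refine absurd (eq_zero_of_transpose_map_mulVec_eq_zero hB hdiag hconn ?_ hs) hu0
    rw [hA, hμ, sub_self, zero_smul]
  · obtain ⟨v, hv0, hv⟩ := exists_mulVec_eq_smul_of_transpose ((Dmat B + B).map Complex.ofReal)
      ⟨u, hu0, by rwa [← transpose_map]⟩
    have := hspec _ v hv0 hv (sub_ne_zero.mpr hμ)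
    simp only [Complex.sub_re, Complex.ofReal_re] at this
    linarith

theorem tendsto_exp_extractionMatrix_mulVec (hB : ∀ i j, 0 ≤ B i j) (hdiag : ∀ i, B i i = 0)
    (hconn : StronglyConnected B) {F : Finset (Fin n)} {θ : ℝ}
    (hspec : ∀ (μ : ℂ) (v : Fin n → ℂ), v ≠ 0 →
      ((Dmat B + B).map Complex.ofReal) *ᵥ v = μ • v → μ ≠ 0 → (F.card : ℝ) * θ < -μ.re)
    {w : Fin n → ℝ} (hw : ∑ i, w i = 0) :
    Tendsto (fun t : ℝ => exp (t • extractionMatrix B F θ) *ᵥ w) atTop (𝓝 0) := by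
  refine tendsto_exp_smul_mulVec_of_map_ofReal _ w
    (tendsto_exp_smul_mulVec_of_forall_re_neg _ (p := LinearMap.ker (dotProductBilin ℂ ℂ 1))
      (fun u _ => ?_) (fun μ u hu hu0 h => ?_) ?_)
  · have h1 : (1 : Fin n → ℂ) ᵥ* (extractionMatrix B F θ).map Complex.ofReal = 0 := by
      ext j
      simpa [vecMul, dotProduct] using
        congrArg Complex.ofReal (congrFun (one_vecMul_extractionMatrix hdiag F θ) j)
    simp [dotProduct_mulVec, h1]
  · exact re_neg_of_map_extractionMatrix_mulVec_eq_smul hB hdiag hconn hspec hu0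
      (by simpa [one_dotProduct] using hu) h
  · simpa [one_dotProduct] using (by exact_mod_cast hw : ∑ i, (w i : ℂ) = 0)

end Model

theorem stmt13_general {n : ℕ} (B : Matrix (Fin n) (Fin n) ℝ)
    (hB : ∀ i j, 0 ≤ B i j) (hdiag : ∀ i, B i i = 0)
    (hconn : StronglyConnected B)
    (F : Finset (Fin n)) (θ : ℝ)
    (hspec : ∀ (μ : ℂ) (v : Fin n → ℂ), v ≠ 0 →
      ((Dmat B + B).map Complex.ofReal) *ᵥ v = μ • v → μ ≠ 0 →
      (F.card : ℝ) * θ < -μ.re)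
    (ζθ : Fin n → ℝ)
    (hζθker : ((Dmat B + B)ᵀ - θ • Emat F + ((F.card : ℝ) * θ) • 1) *ᵥ ζθ = 0)
    (hζθpos : ∀ i, 0 < ζθ i) :
    ∀ x : Fin n → ℝ, (∀ i, 0 ≤ x i) → 0 < ∑ i, x i →
      Tendsto (fun t : ℝ =>
          NormedSpace.exp (t • ((Dmat B + B)ᵀ - θ • Emat F + ((F.card : ℝ) * θ) • 1)) *ᵥ
            ((∑ i, x i)⁻¹ • x))
        atTop (nhds ((∑ i, ζθ i)⁻¹ • ζθ)) ∧
      ∀ (φ : ℝ → ℝ) (m : ℝ → ℝ) (mhat : ℝ),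
        ContinuousOn φ (Set.Ioi 0) →
        (∀ t : ℝ, 0 ≤ t → 0 < m t) →
        (∀ t : ℝ, 0 ≤ t → HasDerivAt m ((φ (m t) - F.card * θ) * m t) t) →
        m 0 = ∑ i, x i →
        Tendsto m atTop (nhds mhat) → 0 < mhat →
        Tendsto (fun t : ℝ => m t •
            (NormedSpace.exp (t • ((Dmat B + B)ᵀ - θ • Emat F + ((F.card : ℝ) * θ) • 1)) *ᵥ
              ((∑ i, x i)⁻¹ • x)))
          atTop (nhds (mhat • ((∑ i, ζθ i)⁻¹ • ζθ))) := by
  intro x _ hx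
  obtain ⟨i, -, -⟩ := exists_ne_zero_of_sum_ne_zero hx.ne'
  have hζsum : ∑ i, ζθ i ≠ 0 := (sum_pos (fun i _ => hζθpos i) ⟨i, mem_univ i⟩).ne'
  have hY := tendsto_exp_smul_mulVec_normalized
    (fun w hw => tendsto_exp_extractionMatrix_mulVec hB hdiag hconn hspec hw) hζθker hζsum hx.ne'
  exact ⟨hY, fun _ _ _ _ _ _ _ hm _ => hm.smul hY⟩

/-- If `fθ < −Re λ` for every nonzero eigenvalue `λ` of `D+B` and `ζ_θ`, a nonzero kernel
vector of `M = D+Bᵀ − θE + fθI`, is strictly positive, then: (i) `Y(t) = exp(tM)(x/⟨e,x⟩)`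
converges to `ζ_θ/⟨e,ζ_θ⟩`; (ii) if, moreover, the total mass `m` solves
`m′ = (φ(m) − fθ)m`, `m(0) = ⟨e,x⟩`, and `m(t) → m̂ ∈ (0,∞)`, then `X = mY` converges to
`m̂ · ζ_θ/⟨e,ζ_θ⟩`. -/
theorem stmt13 {n : ℕ} (hn : 1 ≤ n) (B : Matrix (Fin n) (Fin n) ℝ)
    (hB : ∀ i j, 0 ≤ B i j) (hdiag : ∀ i, B i i = 0)
    (hconn : StronglyConnected B)
    (F : Finset (Fin n)) (hF : F.Nonempty) (θ : ℝ) (hθ : 0 < θ)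
    (hspec : ∀ (μ : ℂ) (v : Fin n → ℂ), v ≠ 0 →
      ((Dmat B + B).map Complex.ofReal) *ᵥ v = μ • v → μ ≠ 0 →
      (F.card : ℝ) * θ < -μ.re)
    (ζθ : Fin n → ℝ) (hζθ0 : ζθ ≠ 0)
    (hζθker : ((Dmat B + B)ᵀ - θ • Emat F + ((F.card : ℝ) * θ) • 1) *ᵥ ζθ = 0)
    (hζθpos : ∀ i, 0 < ζθ i) :
    ∀ x : Fin n → ℝ, (∀ i, 0 ≤ x i) → 0 < ∑ i, x i →
      Tendsto (fun t : ℝ =>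
          NormedSpace.exp (t • ((Dmat B + B)ᵀ - θ • Emat F + ((F.card : ℝ) * θ) • 1)) *ᵥ
            ((∑ i, x i)⁻¹ • x))
        atTop (nhds ((∑ i, ζθ i)⁻¹ • ζθ)) ∧
      ∀ (φ : ℝ → ℝ) (m : ℝ → ℝ) (mhat : ℝ),
        ContinuousOn φ (Set.Ioi 0) →
        (∀ t : ℝ, 0 ≤ t → 0 < m t) →
        (∀ t : ℝ, 0 ≤ t → HasDerivAt m ((φ (m t) - F.card * θ) * m t) t) →
        m 0 = ∑ i, x i →
        Tendsto m atTop (nhds mhat) → 0 < mhat →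
        Tendsto (fun t : ℝ => m t •
            (NormedSpace.exp (t • ((Dmat B + B)ᵀ - θ • Emat F + ((F.card : ℝ) * θ) • 1)) *ᵥ
              ((∑ i, x i)⁻¹ • x)))
          atTop (nhds (mhat • ((∑ i, ζθ i)⁻¹ • ζθ))) :=
  stmt13_general B hB hdiag hconn F θ hspec ζθ hζθker hζθpos
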